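/- Every positive word W in two letters x, y can be rewritten as (xyxy)^m · P for some integer m ≥ 0 and a positive word P containing no occurrence of the subwords xyxy or yxyx, in any group where the relation xyxy = yxyx holds and xyxy is central in ⟨x,y⟩. -/
import Mathlib


/-- The product of the word `W` over the alphabet `{x, y}` (encoded by `Bool`,
with `true ↦ x` and `false ↦ y`) in a group. -/
def wordProd {G : Type*} [Group G] (x y : G) (W : List Bool) : G :=
  (W.map (fun b => if b then x else y)).prod

/-- In any group in which `xyxy = yxyx` (so that `z = xyxy` is central in the
subgroup generated by `x` and `y`), every positive word `W` in `x, y` can be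
rewritten as `(xyxy)^m · P` for some `m ≥ 0` and a positive word `P`
containing no occurrence of the subwords `xyxy` or `yxyx`. -/
theorem positive_word_normal_form {G : Type*} [Group G] (x y : G)
    (hrel : x * y * x * y = y * x * y * x) (W : List Bool) :
    ∃ (m : ℕ) (P : List Bool),
      ¬ [true, false, true, false] <:+: P ∧
      ¬ [false, true, false, true] <:+: P ∧
      wordProd x y W = (x * y * x * y) ^ m * wordProd x y P := by
  have hzx : Commute (x * y * x * y) x := by
    unfold Commute SemiconjBy
    conv_rhs => rw [hrel]
    simp [mul_assoc]
  have hzy : Commute (x * y * x * y) y := by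
    unfold Commute SemiconjBy
    conv_lhs => rw [hrel]
    simp [mul_assoc]
  have hz : ∀ l : List Bool, Commute (x * y * x * y) (wordProd x y l) := by
    intro l
    unfold wordProd
    apply Commute.list_prod_right
    intro a ha
    obtain ⟨b, -, rfl⟩ := List.mem_map.mp ha
    cases b
    · simpa using hzy
    · simpa using hzx
  have happ : ∀ A B : List Bool,
      wordProd x y (A ++ B) = wordProd x y A * wordProd x y B := by
    intro A B; simp [wordProd]
  have hp1 : wordProd x y [true, false, true, false] = x * y * x * y := by
    simp [wordProd, mul_assoc]
  have hp2 : wordProd x y [false, true, false, true] = x * y * x * y := by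
    rw [hrel]; simp [wordProd, mul_assoc]
  suffices H : ∀ n (W : List Bool), W.length ≤ n →
      ∃ (m : ℕ) (P : List Bool),
        ¬ [true, false, true, false] <:+: P ∧
        ¬ [false, true, false, true] <:+: P ∧
        wordProd x y W = (x * y * x * y) ^ m * wordProd x y P from
    H W.length W le_rfl
  intro n
  induction n with
  | zero =>
    intro W hW
    have : W = [] := List.length_eq_zero_iff.mp (Nat.le_zero.mp hW)
    subst this
    exact ⟨0, [], by simp, by simp, by simp⟩
  | succ n ih =>
    intro W hW
    by_cases h1 : [true, false, true, false] <:+: W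
    · obtain ⟨s, t, rfl⟩ := h1
      have hlen : (s ++ t).length ≤ n := by
        simp at hW ⊢; omega
      obtain ⟨m, P, hP1, hP2, hPeq⟩ := ih (s ++ t) hlen
      refine ⟨m + 1, P, hP1, hP2, ?_⟩
      calc wordProd x y (s ++ [true, false, true, false] ++ t)
          = wordProd x y s * (x * y * x * y) * wordProd x y t := by
            rw [happ, happ, hp1]
        _ = (x * y * x * y) * (wordProd x y s * wordProd x y t) := by
            rw [← (hz s).eq, mul_assoc]
        _ = (x * y * x * y) * ((x * y * x * y) ^ m * wordProd x y P) := by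
            rw [← happ, hPeq]
        _ = (x * y * x * y) ^ (m + 1) * wordProd x y P := by
            simp [pow_succ', mul_assoc]
    · by_cases h2 : [false, true, false, true] <:+: W
      · obtain ⟨s, t, rfl⟩ := h2
        have hlen : (s ++ t).length ≤ n := by
          simp at hW ⊢; omega
        obtain ⟨m, P, hP1, hP2, hPeq⟩ := ih (s ++ t) hlen
        refine ⟨m + 1, P, hP1, hP2, ?_⟩
        calc wordProd x y (s ++ [false, true, false, true] ++ t)
            = wordProd x y s * (x * y * x * y) * wordProd x y t := by
              rw [happ, happ, hp2]
          _ = (x * y * x * y) * (wordProd x y s * wordProd x y t) := by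
              rw [← (hz s).eq, mul_assoc]
          _ = (x * y * x * y) * ((x * y * x * y) ^ m * wordProd x y P) := by
              rw [← happ, hPeq]
          _ = (x * y * x * y) ^ (m + 1) * wordProd x y P := by
              simp [pow_succ', mul_assoc]
      · exact ⟨0, W, h1, h2, by simp⟩
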